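/- Let Ω ⊂ ℝⁿ be a smoothly bounded domain and φ ∈ C²(closure Ω) with φ > 0 on closure Ω and ∂φ/∂ν = 0 on ∂Ω. If ∫_Ω (|∇φ|⁴/φ³) ≤ (2+√n)² ∫_Ω φ|D² ln φ|², then ∫_Ω (|D²φ|²/φ) ≤ (2n + 8√n + 10) ∫_Ω φ|D² ln φ|². -/

import Mathlib

/-!
Expanding `D² ln φ = D²φ / φ - ∇φ ⊗ ∇φ / φ²` entrywise and using `a² ≤ 2 (a - b)² + 2 b²`
gives the pointwise bound `|D²φ|² / φ ≤ 2 φ |D² ln φ|² + 2 |∇φ|⁴ / φ³`. Integrating it and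
inserting the hypothesis yields the constant `2 + 2 (2 + √n)² = 2n + 8√n + 10`. The integrands
are integrable because a `C²` function on the compact closure of `Ω` has bounded derivatives
of order at most two in `Ω`.
-/

open MeasureTheory Set Filter Topology

theorem IsCompact.bddAbove_image_of_isBoundedUnder {X : Type*} [TopologicalSpace X]
    {K s : Set X} {g : X → ℝ} (hK : IsCompact K) (hsK : s ⊆ K)
    (hg : ∀ x ∈ K, IsBoundedUnder (· ≤ ·) (𝓝[s] x) g) : BddAbove (g '' s) := by
  rw [← inter_eq_right.mpr hsK]
  refine hK.induction_on (p := fun t => BddAbove (g '' (t ∩ s))) (by simp)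
    (fun t u htu hu => hu.mono (image_mono (inter_subset_inter_left s htu)))
    (fun t u ht hu => by rw [union_inter_distrib_right, image_union]; exact ht.union hu)
    fun x hx => ?_
  obtain ⟨C, hC⟩ := hg x hx
  obtain ⟨u, hu, hxu, hus⟩ := mem_nhdsWithin.mp hC
  exact ⟨u, mem_nhdsWithin_of_mem_nhds (hu.mem_nhds hxu),
    ⟨C, forall_mem_image.mpr fun y hy => hus hy⟩⟩

theorem ContinuousOn.integrableOn_of_norm_le {X : Type*} [TopologicalSpace X]
    [MeasurableSpace X] [OpensMeasurableSpace X] {μ : Measure X} {s : Set X} {g : X → ℝ}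
    {C : ℝ} (hg : ContinuousOn g s) (hs : MeasurableSet s) (hμs : μ s ≠ ⊤)
    (hC : ∀ x ∈ s, ‖g x‖ ≤ C) : IntegrableOn g s μ :=
  ⟨hg.aestronglyMeasurable hs,
    .restrict_of_bounded (C := C) hμs.lt_top (ae_restrict_of_forall_mem hs hC)⟩

theorem setIntegral_le_of_le_two_mul_add {X : Type*} [MeasurableSpace X] {μ : Measure X}
    {s : Set X} {F J G : X → ℝ} {c : ℝ} (hs : MeasurableSet s) (hF : ∀ x ∈ s, 0 ≤ F x)
    (hJ : IntegrableOn J s μ) (hG : IntegrableOn G s μ)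
    (hFJG : ∀ x ∈ s, F x ≤ 2 * J x + 2 * G x) (hGJ : ∫ x in s, G x ∂μ ≤ c * ∫ x in s, J x ∂μ) :
    ∫ x in s, F x ∂μ ≤ (2 + 2 * c) * ∫ x in s, J x ∂μ :=
  calc ∫ x in s, F x ∂μ ≤ ∫ x in s, (2 * J x + 2 * G x) ∂μ :=
        integral_mono_of_nonneg (ae_restrict_of_forall_mem hs hF)
          ((hJ.const_mul 2).add (hG.const_mul 2)) (ae_restrict_of_forall_mem hs hFJG)
    _ = 2 * ∫ x in s, J x ∂μ + 2 * ∫ x in s, G x ∂μ := by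
        rw [integral_add (hJ.const_mul 2) (hG.const_mul 2), integral_const_mul,
          integral_const_mul]
    _ ≤ (2 + 2 * c) * ∫ x in s, J x ∂μ := by linarith

theorem sq_div_le_two_mul_sq_sub_add {t a b : ℝ} (ht : 0 < t) :
    a ^ 2 / t ≤ 2 * (t * (a / t - b / t ^ 2) ^ 2) + 2 * (b ^ 2 / t ^ 3) := by
  have hdiff : 2 * (t * (a / t - b / t ^ 2) ^ 2) + 2 * (b ^ 2 / t ^ 3) - a ^ 2 / t =
      t * (a / t - 2 * b / t ^ 2) ^ 2 := by
    field_simp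
    ring
  linarith [mul_nonneg ht.le (sq_nonneg (a / t - 2 * b / t ^ 2))]

variable {E : Type*} [NormedAddCommGroup E] [NormedSpace ℝ E]

theorem ContDiffOn.isBoundedUnder_norm_iteratedFDeriv {F : Type*} [NormedAddCommGroup F]
    [NormedSpace ℝ F] {f : E → F} {s : Set E} {m : ℕ} (hs : IsOpen s)
    (hf : ContDiffOn ℝ m f (closure s)) {x : E} (hx : x ∈ closure s) :
    IsBoundedUnder (· ≤ ·) (𝓝[s] x) fun y => ‖iteratedFDeriv ℝ m f y‖ := by
  -- `iteratedFDeriv` carries no information on `frontier s`; instead bound the continuous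
  -- Taylor series that `C^m` regularity on the closure provides near `x`.
  obtain ⟨u, hu, p, hp⟩ := contDiffWithinAt_nat.mp (hf x hx)
  rw [insert_eq_of_mem hx] at hu
  have hus : u ∈ 𝓝[s] x := nhdsWithin_mono x subset_closure hu
  have hcont : ContinuousWithinAt (fun y => p y m) s x :=
    ((hp.cont m le_rfl) x (mem_of_mem_nhdsWithin hx hu)).mono_of_mem_nhdsWithin hus
  have hp_eq : ∀ᶠ y in 𝓝[s] x, p y m = iteratedFDeriv ℝ m f y := by
    filter_upwards [eventually_eventually_nhdsWithin.mpr hus, self_mem_nhdsWithin]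
      with y hyu hys
    have hyu' : y ∈ interior u := mem_interior_iff_mem_nhds.mpr (hs.nhdsWithin_eq hys ▸ hyu)
    rw [(hp.mono interior_subset).eq_iteratedFDerivWithin_of_uniqueDiffOn le_rfl
      isOpen_interior.uniqueDiffOn hyu', iteratedFDerivWithin_of_isOpen m isOpen_interior hyu']
  refine ⟨‖p x m‖ + 1, eventually_map.mpr ?_⟩
  filter_upwards [hp_eq, hcont.norm.eventually (eventually_le_nhds (lt_add_one _))]
    with y hy hy_le
  rwa [← hy]

theorem ContDiffOn.exists_norm_iteratedFDeriv_le {F : Type*} [NormedAddCommGroup F]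
    [NormedSpace ℝ F] {f : E → F} {s : Set E} {m : ℕ} (hs : IsOpen s)
    (hcs : IsCompact (closure s)) (hf : ContDiffOn ℝ m f (closure s)) :
    ∃ C, ∀ y ∈ s, ‖iteratedFDeriv ℝ m f y‖ ≤ C := by
  obtain ⟨C, hC⟩ := hcs.bddAbove_image_of_isBoundedUnder subset_closure fun _ hx =>
    hf.isBoundedUnder_norm_iteratedFDeriv hs hx
  exact ⟨C, fun y hy => hC (mem_image_of_mem _ hy)⟩

theorem iteratedFDeriv_two_log_apply {f : E → ℝ} {x : E} (hf : ContDiffAt ℝ 2 f x)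
    (hx : f x ≠ 0) (v w : E) :
    iteratedFDeriv ℝ 2 (fun y => Real.log (f y)) x ![v, w] =
      iteratedFDeriv ℝ 2 f x ![v, w] / f x - fderiv ℝ f x v * fderiv ℝ f x w / f x ^ 2 := by
  have hlog : fderiv ℝ (fun y => Real.log (f y)) =ᶠ[𝓝 x] fun y => (f y)⁻¹ • fderiv ℝ f y := by
    filter_upwards [hf.eventually (by simp), hf.continuousAt.eventually_ne hx] with y hy hy0
    exact ((hy.differentiableAt (by simp)).hasFDerivAt.log hy0).fderiv
  have hinv : HasFDerivAt (fun y => (f y)⁻¹) (-(f x ^ 2)⁻¹ • fderiv ℝ f x) x :=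
    (hasDerivAt_inv hx).comp_hasFDerivAt x (hf.differentiableAt (by simp)).hasFDerivAt
  have hD : HasFDerivAt (fun y => (f y)⁻¹ • fderiv ℝ f y) _ x :=
    hinv.smul ((hf.fderiv_right (m := 1) le_rfl).differentiableAt one_ne_zero).hasFDerivAt
  rw [iteratedFDeriv_two_apply, iteratedFDeriv_two_apply, hlog.fderiv_eq, hD.fderiv]
  simp only [Matrix.cons_val_zero, Matrix.cons_val_one, add_apply,
    smul_apply, ContinuousLinearMap.smulRight_apply, smul_eq_mul]
  ring

theorem sum_sq_iteratedFDeriv_two_div_le {ι : Type*} [Fintype ι] (e : ι → E) {f : E → ℝ}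
    {x : E} (hf : ContDiffAt ℝ 2 f x) (hx : 0 < f x) :
    (∑ i, ∑ j, iteratedFDeriv ℝ 2 f x ![e i, e j] ^ 2) / f x ≤
      2 * (f x * ∑ i, ∑ j, iteratedFDeriv ℝ 2 (fun y => Real.log (f y)) x ![e i, e j] ^ 2) +
        2 * ((∑ i, fderiv ℝ f x (e i) ^ 2) ^ 2 / f x ^ 3) := by
  have hsq : (∑ i, fderiv ℝ f x (e i) ^ 2) ^ 2 =
      ∑ i, ∑ j, (fderiv ℝ f x (e i) * fderiv ℝ f x (e j)) ^ 2 := by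
    simp_rw [sq (∑ i, _), Finset.sum_mul_sum, mul_pow]
  simp only [hsq, iteratedFDeriv_two_log_apply hf hx.ne', Finset.sum_div, Finset.mul_sum,
    ← Finset.sum_add_distrib]
  gcongr with i _ j _
  exact sq_div_le_two_mul_sq_sub_add hx

section Integrability

variable [MeasurableSpace E] [OpensMeasurableSpace E] {μ : Measure E} [IsFiniteMeasureOnCompacts μ]
  {ι : Type*} [Fintype ι] (e : ι → E) {g h : E → ℝ} {s : Set E}

theorem integrableOn_sq_sum_sq_fderiv_mul (hs : IsOpen s) (hcs : IsCompact (closure s))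
    (hg : ContDiffOn ℝ 1 g (closure s)) (hh : ContinuousOn h (closure s)) :
    IntegrableOn (fun x => (∑ i, fderiv ℝ g x (e i) ^ 2) ^ 2 * h x) s μ := by
  obtain ⟨C, hC⟩ := hg.exists_norm_iteratedFDeriv_le hs hcs
  obtain ⟨B, hB⟩ := hcs.exists_bound_of_continuousOn hh
  have hcont : Continuous fun L : E →L[ℝ] ℝ => (∑ i, L (e i) ^ 2) ^ 2 := by fun_prop
  refine ContinuousOn.integrableOn_of_norm_le (C := (∑ i, (C * ‖e i‖) ^ 2) ^ 2 * B)
    ((hcont.comp_continuousOn ((hg.mono subset_closure).continuousOn_fderiv_of_isOpen hs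
      le_rfl)).mul (hh.mono subset_closure)) hs.measurableSet
    ((measure_mono subset_closure).trans_lt hcs.measure_lt_top).ne fun x hx => ?_
  have hentry : ∀ i, fderiv ℝ g x (e i) ^ 2 ≤ (C * ‖e i‖) ^ 2 := fun i => by
    refine sq_le_sq.mpr (((fderiv ℝ g x).le_opNorm (e i)).trans ?_ |>.trans (le_abs_self _))
    rw [← norm_iteratedFDeriv_one]
    gcongr
    exact hC x hx
  have hS : 0 ≤ ∑ i, fderiv ℝ g x (e i) ^ 2 := by positivity
  rw [norm_mul, norm_pow, Real.norm_of_nonneg hS]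
  exact mul_le_mul (pow_le_pow_left₀ hS (Finset.sum_le_sum fun i _ => hentry i) 2)
    (hB x (subset_closure hx)) (norm_nonneg _) (by positivity)

theorem integrableOn_mul_sum_sq_iteratedFDeriv_two (hs : IsOpen s)
    (hcs : IsCompact (closure s)) (hg : ContDiffOn ℝ 2 g (closure s))
    (hh : ContinuousOn h (closure s)) :
    IntegrableOn (fun x => h x * ∑ i, ∑ j, iteratedFDeriv ℝ 2 g x ![e i, e j] ^ 2) s μ := by
  obtain ⟨C, hC⟩ := hg.exists_norm_iteratedFDeriv_le hs hcs
  obtain ⟨B, hB⟩ := hcs.exists_bound_of_continuousOn hh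
  have hcont : Continuous fun L : ContinuousMultilinearMap ℝ (fun _ : Fin 2 => E) ℝ =>
      ∑ i, ∑ j, L ![e i, e j] ^ 2 := by fun_prop
  refine ContinuousOn.integrableOn_of_norm_le (C := B * ∑ i, ∑ j, (C * (‖e i‖ * ‖e j‖)) ^ 2)
    ((hh.mono subset_closure).mul (hcont.comp_continuousOn
      (ContinuousOn.continuousOn_iteratedFDeriv (hg.mono subset_closure) hs le_rfl)))
    hs.measurableSet ((measure_mono subset_closure).trans_lt hcs.measure_lt_top).ne
    fun x hx => ?_
  have hentry : ∀ i j, iteratedFDeriv ℝ 2 g x ![e i, e j] ^ 2 ≤ (C * (‖e i‖ * ‖e j‖)) ^ 2 :=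
    fun i j => by
      refine sq_le_sq.mpr (((iteratedFDeriv ℝ 2 g x).le_opNorm ![e i, e j]).trans ?_
        |>.trans (le_abs_self _))
      simp only [Fin.prod_univ_two, Matrix.cons_val_zero, Matrix.cons_val_one,
        Matrix.cons_val_fin_one]
      gcongr
      exact hC x hx
  have hS : 0 ≤ ∑ i, ∑ j, iteratedFDeriv ℝ 2 g x ![e i, e j] ^ 2 := by positivity
  rw [norm_mul, Real.norm_of_nonneg hS]
  exact mul_le_mul (hB x (subset_closure hx))
    (Finset.sum_le_sum fun i _ => Finset.sum_le_sum fun j _ => hentry i j) hS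
    ((norm_nonneg _).trans (hB x (subset_closure hx)))

end Integrability

theorem stmt_2_general (n : ℕ) (Ω : Set (EuclideanSpace ℝ (Fin n)))
    (hΩopen : IsOpen Ω) (hΩbdd : Bornology.IsBounded Ω)
    (φ : EuclideanSpace ℝ (Fin n) → ℝ)
    (hφC2 : ContDiffOn ℝ 2 φ (closure Ω))
    (hφpos : ∀ x ∈ closure Ω, 0 < φ x)
    (hyp :
      (∫ x in Ω,
          (∑ i : Fin n, (fderiv ℝ φ x (EuclideanSpace.single i 1)) ^ 2) ^ 2 / φ x ^ 3)
        ≤ (2 + Real.sqrt n) ^ 2 *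
          ∫ x in Ω, φ x *
            (∑ i : Fin n, ∑ j : Fin n,
              (iteratedFDeriv ℝ 2 (fun y => Real.log (φ y)) x
                ![EuclideanSpace.single i 1, EuclideanSpace.single j 1]) ^ 2)) :
    (∫ x in Ω,
        (∑ i : Fin n, ∑ j : Fin n,
          (iteratedFDeriv ℝ 2 φ x
            ![EuclideanSpace.single i 1, EuclideanSpace.single j 1]) ^ 2) / φ x)
      ≤ (2 * n + 8 * Real.sqrt n + 10) *
        ∫ x in Ω, φ x *
          (∑ i : Fin n, ∑ j : Fin n,
            (iteratedFDeriv ℝ 2 (fun y => Real.log (φ y)) x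
              ![EuclideanSpace.single i 1, EuclideanSpace.single j 1]) ^ 2) := by
  let e : Fin n → EuclideanSpace ℝ (Fin n) := fun i => EuclideanSpace.single i 1
  have hcs : IsCompact (closure Ω) := hΩbdd.isCompact_closure
  have hpos : ∀ x ∈ Ω, 0 < φ x := fun x hx => hφpos x (subset_closure hx)
  have hJ := integrableOn_mul_sum_sq_iteratedFDeriv_two (μ := volume) e hΩopen hcs
    (hφC2.log fun x hx => (hφpos x hx).ne') hφC2.continuousOn
  have hG : IntegrableOn (fun x => (∑ i, fderiv ℝ φ x (e i) ^ 2) ^ 2 / φ x ^ 3) Ω := by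
    have hinv : ContinuousOn (fun x => (φ x ^ 3)⁻¹) (closure Ω) :=
      (hφC2.continuousOn.pow 3).inv₀ fun x hx => (pow_pos (hφpos x hx) 3).ne'
    simpa only [div_eq_mul_inv] using integrableOn_sq_sum_sq_fderiv_mul (μ := volume) e hΩopen
      hcs (hφC2.of_le one_le_two) hinv
  have hconst : 2 + 2 * (2 + Real.sqrt n) ^ 2 = 2 * n + 8 * Real.sqrt n + 10 := by
    rw [add_sq, Real.sq_sqrt n.cast_nonneg]
    ring
  rw [← hconst]
  exact setIntegral_le_of_le_two_mul_add hΩopen.measurableSet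
    (fun x hx => div_nonneg (by positivity) (hpos x hx).le) hJ hG
    (fun x hx => sum_sq_iteratedFDeriv_two_div_le e
      ((hφC2.mono subset_closure).contDiffAt (hΩopen.mem_nhds hx)) (hpos x hx)) hyp

/-- for a smoothly bounded domain `Ω ⊆ ℝⁿ` and a positive `C²` function `φ`
on `closure Ω` with vanishing normal derivative on `∂Ω`, if
`∫_Ω |∇φ|⁴/φ³ ≤ (2+√n)² ∫_Ω φ |D² ln φ|²`, then
`∫_Ω |D²φ|²/φ ≤ (2n+8√n+10) ∫_Ω φ |D² ln φ|²`.
Here `∂_i ψ x = (fderiv ψ x)(e_i)`, the Hessian entries are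
`(iteratedFDeriv 2 ψ x)(e_i, e_j)`, `|∇φ|` is the Euclidean norm of the gradient and
`|D²ψ|` the Frobenius norm of the Hessian. -/
theorem stmt_2 (n : ℕ) (hn : 1 ≤ n) (Ω : Set (EuclideanSpace ℝ (Fin n)))
    (hΩopen : IsOpen Ω) (hΩbdd : Bornology.IsBounded Ω) (hΩne : Ω.Nonempty)
    (ν : EuclideanSpace ℝ (Fin n) → EuclideanSpace ℝ (Fin n))
    (φ : EuclideanSpace ℝ (Fin n) → ℝ)
    (hφC2 : ContDiffOn ℝ 2 φ (closure Ω))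
    (hφpos : ∀ x ∈ closure Ω, 0 < φ x)
    (hν : ∀ x ∈ frontier Ω, fderiv ℝ φ x (ν x) = 0)
    (hyp :
      (∫ x in Ω,
          (∑ i : Fin n, (fderiv ℝ φ x (EuclideanSpace.single i 1)) ^ 2) ^ 2 / φ x ^ 3)
        ≤ (2 + Real.sqrt n) ^ 2 *
          ∫ x in Ω, φ x *
            (∑ i : Fin n, ∑ j : Fin n,
              (iteratedFDeriv ℝ 2 (fun y => Real.log (φ y)) x
                ![EuclideanSpace.single i 1, EuclideanSpace.single j 1]) ^ 2)) :
    (∫ x in Ω,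
        (∑ i : Fin n, ∑ j : Fin n,
          (iteratedFDeriv ℝ 2 φ x
            ![EuclideanSpace.single i 1, EuclideanSpace.single j 1]) ^ 2) / φ x)
      ≤ (2 * n + 8 * Real.sqrt n + 10) *
        ∫ x in Ω, φ x *
          (∑ i : Fin n, ∑ j : Fin n,
            (iteratedFDeriv ℝ 2 (fun y => Real.log (φ y)) x
              ![EuclideanSpace.single i 1, EuclideanSpace.single j 1]) ^ 2) :=
  stmt_2_general n Ω hΩopen hΩbdd φ hφC2 hφpos hyp
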